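/- Let H be a graph with at least one edge and no isolated edges such that k1' > k0. Then for every integer n ≥ |H|, sat(n, H) ≥ (k0 + (k1' − k0)/(k1' + 1))·n/2 − c1, where c1 = (k0 + 1)(k1' − k0)/(2·k1' + 2) + (k0 + 1)²/8. -/

import Mathlib

/-!
Write `k = k0` and `K = k1'`. If `x, y` are nonadjacent in an `H`-saturated graph `G`, the copy
of `H` in `G + xy` uses `xy` as the image of some edge `uv`, so `wt0 uv ≤ max (d x) (d y)`, and
every vertex of `N(uv)` lands on a neighbour of `x` or `y` of at least its degree. Consequently the
vertices of degree `< k` form a clique, and of two nonadjacent vertices of degree `≤ k` one has a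
neighbour of degree `≥ K` (the edge `uv` then has `wt0 = k`, so `wt1 uv ≥ K`). Hence all but
at most `k + 1` vertices of degree `≤ k` have a neighbour of degree `≥ K`, and these are paid
for by the degree sum of the high-degree class; summing degrees class by class gives the bound.
-/

open SimpleGraph

/-- `G` contains a subgraph isomorphic to `H`. -/
def ContainsCopy {α β : Type*} (G : SimpleGraph α) (H : SimpleGraph β) : Prop :=
  ∃ f : β → α, Function.Injective f ∧ ∀ ⦃u v : β⦄, H.Adj u v → G.Adj (f u) (f v)

/-- `G` is `H`-saturated: `G` is `H`-free but adding any edge creates a copy of `H`. -/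
def IsSat {α β : Type*} (G : SimpleGraph α) (H : SimpleGraph β) : Prop :=
  ¬ ContainsCopy G H ∧
    ∀ x y : α, x ≠ y → ¬ G.Adj x y →
      ContainsCopy (G ⊔ SimpleGraph.fromEdgeSet {s(x, y)}) H

/-- The degree of a vertex. -/
noncomputable def deg {α : Type*} (G : SimpleGraph α) (v : α) : ℕ :=
  (G.neighborSet v).ncard

/-- `wt0 uv = max (d u) (d v) - 1`. -/
noncomputable def wt0 {β : Type*} (H : SimpleGraph β) (u v : β) : ℕ :=
  max (deg H u) (deg H v) - 1

/-- The neighborhood of the edge `uv`: `(N(u) - v) ∪ (N(v) - u)`. -/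
def edgeNbhd {β : Type*} (H : SimpleGraph β) (u v : β) : Set β :=
  (H.neighborSet u \ {v}) ∪ (H.neighborSet v \ {u})

/-- `wt1 uv`: the maximum degree of a vertex in the neighborhood of the edge `uv`. -/
noncomputable def wt1 {β : Type*} (H : SimpleGraph β) (u v : β) : ℕ :=
  sSup (deg H '' edgeNbhd H u v)

/-- `k0`: the minimum of `wt0` over the edges of `H`. -/
noncomputable def paramK0 {β : Type*} (H : SimpleGraph β) : ℕ :=
  sInf {k | ∃ u v, H.Adj u v ∧ wt0 H u v = k}

/-- `k1`: the minimum of `wt1` over the edges of `H`. -/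
noncomputable def paramK1 {β : Type*} (H : SimpleGraph β) : ℕ :=
  sInf {k | ∃ u v, H.Adj u v ∧ wt1 H u v = k}

/-- `k1'`: the minimum of `wt1` over the edges of `H` minimizing `wt0`. -/
noncomputable def paramK1p {β : Type*} (H : SimpleGraph β) : ℕ :=
  sInf {k | ∃ u v, H.Adj u v ∧ wt0 H u v = paramK0 H ∧ wt1 H u v = k}

/-- `k0'`: the minimum of `wt0` over the edges of `H` minimizing `wt1`. -/
noncomputable def paramK0p {β : Type*} (H : SimpleGraph β) : ℕ :=
  sInf {k | ∃ u v, H.Adj u v ∧ wt1 H u v = paramK1 H ∧ wt0 H u v = k}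

lemma containsCopy_iff_isContained {α β : Type*} {G : SimpleGraph α} {H : SimpleGraph β} :
    ContainsCopy G H ↔ H ⊑ G :=
  ⟨fun ⟨f, hf, hadj⟩ => ⟨⟨⟨f, fun h => hadj h⟩, hf⟩⟩,
    fun ⟨f⟩ => ⟨f, f.injective, fun _ _ h => f.toHom.map_adj h⟩⟩

open Finset

lemma deg_eq_degree {α : Type*} (G : SimpleGraph α) (v : α) [Fintype (G.neighborSet v)] :
    deg G v = G.degree v := by
  rw [deg, Set.ncard_eq_toFinset_card']
  rfl

section SupEdge

variable {α : Type*} {G : SimpleGraph α} {x y z : α}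

lemma adj_of_sup_edge_adj {a b : α} (h : (G ⊔ edge x y).Adj a b) (hab : s(a, b) ≠ s(x, y)) :
    G.Adj a b := by
  refine h.resolve_right fun he => hab ?_
  rw [edge_adj] at he
  rcases he.1 with ⟨rfl, rfl⟩ | ⟨rfl, rfl⟩ <;> simp

lemma neighborSet_sup_edge_of_ne (hx : z ≠ x) (hy : z ≠ y) :
    (G ⊔ edge x y).neighborSet z = G.neighborSet z := by
  ext w
  simp [edge_adj, hx, hy]

lemma deg_sup_edge_of_ne (hx : z ≠ x) (hy : z ≠ y) : deg (G ⊔ edge x y) z = deg G z := by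
  rw [deg, deg, neighborSet_sup_edge_of_ne hx hy]

lemma deg_sup_edge_left_le [Finite α] : deg (G ⊔ edge x y) x ≤ deg G x + 1 := by
  have hsub : (G ⊔ edge x y).neighborSet x ⊆ insert y (G.neighborSet x) := by
    intro w hw
    rcases hw with hw | hw
    · exact Or.inr hw
    · rw [edge_adj] at hw
      rcases hw.1 with ⟨-, rfl⟩ | ⟨-, rfl⟩
      · exact Or.inl rfl
      · exact (hw.2 rfl).elim
  exact (Set.ncard_le_ncard hsub (Set.toFinite _)).trans (Set.ncard_insert_le _ _)

lemma deg_sup_edge_right_le [Finite α] : deg (G ⊔ edge x y) y ≤ deg G y + 1 := by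
  rw [edge_comm]
  exact deg_sup_edge_left_le

end SupEdge

namespace SimpleGraph.Copy

variable {α β : Type*} {G : SimpleGraph α} {H : SimpleGraph β} {x y : α} {u v w : β}

lemma deg_le [Finite α] (f : Copy H G) (v : β) : deg H v ≤ deg G (f v) := by
  simp only [deg, ← Nat.card_coe_set_eq]
  exact Nat.card_le_card_of_injective _ (f.mapNeighborSet v).injective

lemma exists_adj_map_eq_of_not_isContained (f : Copy H (G ⊔ edge x y)) (hH : ¬ H ⊑ G) :
    ∃ u v, H.Adj u v ∧ f u = x ∧ f v = y := by
  by_contra! hxy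
  refine hH ⟨⟨⟨f, fun {a b} hab => adj_of_sup_edge_adj (f.toHom.map_adj hab) ?_⟩,
    f.injective⟩⟩
  intro he
  rcases Sym2.eq_iff.1 he with ⟨ha, hb⟩ | ⟨ha, hb⟩
  · exact hxy a b hab ha hb
  · exact hxy b a hab.symm hb ha

lemma adj_and_deg_le_of_mem_edgeNbhd [Finite α] (f : Copy H (G ⊔ edge x y)) (hux : f u = x)
    (hvy : f v = y) (hw : w ∈ edgeNbhd H u v) :
    (G.Adj x (f w) ∨ G.Adj y (f w)) ∧ deg H w ≤ deg G (f w) := by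
  obtain ⟨hwu, hwv⟩ : w ≠ u ∧ w ≠ v := by
    rcases hw with ⟨huw, hwv⟩ | ⟨hvw, hwu⟩
    · exact ⟨(H.ne_of_adj huw).symm, hwv⟩
    · exact ⟨hwu, (H.ne_of_adj hvw).symm⟩
  have hfx : f w ≠ x := fun h => hwu (f.injective (h.trans hux.symm))
  have hfy : f w ≠ y := fun h => hwv (f.injective (h.trans hvy.symm))
  refine ⟨?_, deg_sup_edge_of_ne hfx hfy ▸ f.deg_le w⟩
  rcases hw with ⟨huw, -⟩ | ⟨hvw, -⟩
  · refine Or.inl (adj_of_sup_edge_adj (hux ▸ f.toHom.map_adj huw) fun he => ?_)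
    rcases Sym2.eq_iff.1 he with ⟨-, h⟩ | ⟨-, h⟩
    exacts [hfy h, hfx h]
  · refine Or.inr (adj_of_sup_edge_adj (hvy ▸ f.toHom.map_adj hvw) fun he => ?_)
    rcases Sym2.eq_iff.1 he with ⟨-, h⟩ | ⟨-, h⟩
    exacts [hfy h, hfx h]

end SimpleGraph.Copy

lemma exists_mem_edgeNbhd_wt1_eq_deg {β : Type*} [Finite β] {H : SimpleGraph β} {u v : β}
    (h : (edgeNbhd H u v).Nonempty) : ∃ w ∈ edgeNbhd H u v, deg H w = wt1 H u v :=
  Nat.sSup_mem (h.image _) ((Set.toFinite _).image _).bddAbove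

lemma paramK0_le_wt0 {β : Type*} {H : SimpleGraph β} {u v : β} (h : H.Adj u v) :
    paramK0 H ≤ wt0 H u v :=
  Nat.sInf_le ⟨u, v, h, rfl⟩

lemma paramK1p_le_wt1 {β : Type*} {H : SimpleGraph β} {u v : β} (h : H.Adj u v)
    (h0 : wt0 H u v = paramK0 H) : paramK1p H ≤ wt1 H u v :=
  Nat.sInf_le ⟨u, v, h, h0, rfl⟩

namespace IsSat

variable {α β : Type*} [Finite α] {G : SimpleGraph α} {H : SimpleGraph β} {x y : α}

lemma exists_adj_wt0_le (hG : IsSat G H) (hxy : x ≠ y) (hadj : ¬G.Adj x y) :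
    ∃ u v, H.Adj u v ∧ wt0 H u v ≤ max (deg G x) (deg G y) ∧
      ∀ w ∈ edgeNbhd H u v, ∃ z, (G.Adj x z ∨ G.Adj y z) ∧ deg H w ≤ deg G z := by
  obtain ⟨f⟩ : H ⊑ G ⊔ edge x y := containsCopy_iff_isContained.1 (hG.2 x y hxy hadj)
  obtain ⟨u, v, huv, hux, hvy⟩ :=
    f.exists_adj_map_eq_of_not_isContained fun h => hG.1 (containsCopy_iff_isContained.2 h)
  refine ⟨u, v, huv, ?_, fun w hw => ⟨f w, f.adj_and_deg_le_of_mem_edgeNbhd hux hvy hw⟩⟩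
  have hu : deg H u ≤ deg G x + 1 := (hux ▸ f.deg_le u).trans deg_sup_edge_left_le
  have hv : deg H v ≤ deg G y + 1 := (hvy ▸ f.deg_le v).trans deg_sup_edge_right_le
  rw [wt0]
  omega

lemma paramK0_le_max_deg (hG : IsSat G H) (hxy : x ≠ y) (hadj : ¬G.Adj x y) :
    paramK0 H ≤ max (deg G x) (deg G y) := by
  obtain ⟨u, v, huv, hwt, -⟩ := hG.exists_adj_wt0_le hxy hadj
  exact (paramK0_le_wt0 huv).trans hwt

lemma exists_adj_paramK1p_le_deg [Finite β] (hG : IsSat G H)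
    (hiso : ∀ u v, H.Adj u v → (edgeNbhd H u v).Nonempty) (hxy : x ≠ y) (hadj : ¬G.Adj x y)
    (hx : deg G x ≤ paramK0 H) (hy : deg G y ≤ paramK0 H) :
    ∃ z, (G.Adj x z ∨ G.Adj y z) ∧ paramK1p H ≤ deg G z := by
  obtain ⟨u, v, huv, hwt, hnbhd⟩ := hG.exists_adj_wt0_le hxy hadj
  have hwt0 : wt0 H u v = paramK0 H :=
    le_antisymm (hwt.trans (max_le hx hy)) (paramK0_le_wt0 huv)
  obtain ⟨w, hw, hdeg⟩ := exists_mem_edgeNbhd_wt1_eq_deg (hiso u v huv)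
  obtain ⟨z, hz, hwz⟩ := hnbhd w hw
  exact ⟨z, hz, (paramK1p_le_wt1 huv hwt0).trans (hdeg ▸ hwz)⟩

end IsSat

/-- The sizes `a, b, m, c` and degree sums `SA, SB, SM, SC` of the vertex classes of degree `< k`,
`= k`, in `(k, K)` and `≥ K`; `hA` comes from the low class being a clique. Weighting the degree
sums by `K + 1` and trading `(K - k) SC` against `hL` leaves `(K + 1)(a² - (k + 1) a)`, which is
at least `-(K + 1)(k + 1)² / 4`. -/
lemma le_of_degree_class_sums {k K n e a b m c SA SB SM SC : ℕ} (hkK : k < K)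
    (hn : a + b + m + c = n) (he : SA + SB + SM + SC = 2 * e)
    (hA : a * a ≤ SA + a) (hB : b * k ≤ SB) (hM : m * (k + 1) ≤ SM) (hC : c * K ≤ SC)
    (hL : a + b ≤ SC + (k + 1)) :
    ((k : ℝ) + ((K : ℝ) - k) / ((K : ℝ) + 1)) * n / 2 -
      (((k : ℝ) + 1) * ((K : ℝ) - k) / (2 * (K : ℝ) + 2) + ((k : ℝ) + 1) ^ 2 / 8) ≤
      e := by
  have hkK : k + 1 ≤ K := hkK
  rify at hkK hn he hA hB hM hC hL
  have hk1 : (0 : ℝ) ≤ k + 1 := by positivity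
  have hK : (0 : ℝ) < K + 1 := by positivity
  have key : K * (k + 1) * (n : ℝ) - (k + 1) * (K - k) - (K + 1) * (k + 1) ^ 2 / 4 ≤
      (K + 1) * (2 * e) := by
    rw [← he, ← hn]
    linarith [mul_le_mul_of_nonneg_left hA hK.le, mul_le_mul_of_nonneg_left hB hK.le,
      mul_le_mul_of_nonneg_left hM hK.le, mul_le_mul_of_nonneg_left hC hk1,
      mul_le_mul_of_nonneg_left hL (by linarith : (0 : ℝ) ≤ K - k),
      mul_nonneg hk1 (m.cast_nonneg : (0 : ℝ) ≤ m),
      mul_nonneg hK.le (sq_nonneg (2 * (a : ℝ) - (k + 1)))]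
  have hrw : ((k : ℝ) + ((K : ℝ) - k) / ((K : ℝ) + 1)) * n / 2 -
      (((k : ℝ) + 1) * ((K : ℝ) - k) / (2 * (K : ℝ) + 2) + ((k : ℝ) + 1) ^ 2 / 8) =
      (K * (k + 1) * n - (k + 1) * (K - k) - (K + 1) * (k + 1) ^ 2 / 4) / (2 * (K + 1)) := by
    field_simp
    ring
  rw [hrw, div_le_iff₀ (by positivity)]
  linarith

namespace SimpleGraph

variable {α : Type*} [Fintype α] {G : SimpleGraph α} [DecidableRel G.Adj]

lemma IsClique.card_le_degree_add_one {s : Finset α} (hs : G.IsClique (s : Set α)) {v : α}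
    (hv : v ∈ s) : #s ≤ G.degree v + 1 := by
  classical
  have hsub : s.erase v ⊆ G.neighborFinset v := fun w hw => by
    rw [mem_erase] at hw
    exact (mem_neighborFinset _ _ _).2 (hs hv hw.2 hw.1.symm)
  have := card_le_card hsub
  rw [card_erase_of_mem hv, card_neighborFinset_eq_degree] at this
  omega

lemma IsClique.card_mul_card_le_sum_degree {s : Finset α} (hs : G.IsClique (s : Set α)) :
    #s * #s ≤ ∑ v ∈ s, (G.degree v + 1) := by
  simpa [mul_comm] using card_nsmul_le_sum s _ _ fun v hv => hs.card_le_degree_add_one hv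

lemma card_le_sum_degree_of_forall_exists_adj {s t : Finset α}
    (h : ∀ v ∈ s, ∃ z ∈ t, G.Adj v z) :
    #s ≤ ∑ z ∈ t, G.degree z := by
  classical
  have hsub : s ⊆ t.biUnion (G.neighborFinset ·) := fun v hv => by
    obtain ⟨z, hz, hvz⟩ := h v hv
    exact mem_biUnion.2 ⟨z, hz, (mem_neighborFinset _ _ _).2 hvz.symm⟩
  simpa only [card_neighborFinset_eq_degree] using (card_le_card hsub).trans card_biUnion_le

variable {k K : ℕ}

lemma isClique_degree_lt
    (hlow : ∀ x y, x ≠ y → ¬G.Adj x y → k ≤ max (G.degree x) (G.degree y)) :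
    G.IsClique ({v | G.degree v < k} : Finset α) := by
  intro x hx y hy hxy
  by_contra hadj
  have := hlow x y hxy hadj
  simp only [coe_filter, mem_univ, true_and, Set.mem_ofPred_eq] at hx hy
  omega

lemma card_degree_le_le_sum_degree
    (hhigh : ∀ x y, x ≠ y → ¬G.Adj x y → G.degree x ≤ k → G.degree y ≤ k →
      ∃ z, (G.Adj x z ∨ G.Adj y z) ∧ K ≤ G.degree z) :
    #{v | G.degree v ≤ k} ≤ ∑ z with K ≤ G.degree z, G.degree z + (k + 1) := by
  set L : Finset α := {v | G.degree v ≤ k}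
  set C : Finset α := {v | K ≤ G.degree v}
  have hP : #{v ∈ L | ∃ z ∈ C, G.Adj v z} ≤ ∑ z ∈ C, G.degree z :=
    card_le_sum_degree_of_forall_exists_adj fun v hv => (mem_filter.1 hv).2
  have hQ : #{v ∈ L | ¬∃ z ∈ C, G.Adj v z} ≤ k + 1 := by
    obtain hQ | ⟨x, hx⟩ := Finset.eq_empty_or_nonempty {v ∈ L | ¬∃ z ∈ C, G.Adj v z}
    · rw [hQ, card_empty]
      omega
    have hclique : G.IsClique (({v ∈ L | ¬∃ z ∈ C, G.Adj v z} : Finset α) : Set α) := by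
      intro x hx y hy hxy
      by_contra hadj
      simp only [coe_filter, L, C, mem_filter, mem_univ, true_and, Set.mem_ofPred_eq] at hx hy
      obtain ⟨z, hz | hz, hKz⟩ := hhigh x y hxy hadj hx.1 hy.1
      · exact hx.2 ⟨z, by simpa [C] using hKz, hz⟩
      · exact hy.2 ⟨z, by simpa [C] using hKz, hz⟩
    have hxk : G.degree x ≤ k := by simpa [L] using (mem_filter.1 hx).1
    exact (hclique.card_le_degree_add_one hx).trans (by omega)
  rw [← card_filter_add_card_filter_not (fun v => ∃ z ∈ C, G.Adj v z)]
  omega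

theorem le_card_edgeFinset_of_not_adj_degree (hkK : k < K)
    (hlow : ∀ x y, x ≠ y → ¬G.Adj x y → k ≤ max (G.degree x) (G.degree y))
    (hhigh : ∀ x y, x ≠ y → ¬G.Adj x y → G.degree x ≤ k → G.degree y ≤ k →
      ∃ z, (G.Adj x z ∨ G.Adj y z) ∧ K ≤ G.degree z) :
    ((k : ℝ) + ((K : ℝ) - k) / ((K : ℝ) + 1)) * Fintype.card α / 2 -
      (((k : ℝ) + 1) * ((K : ℝ) - k) / (2 * (K : ℝ) + 2) + ((k : ℝ) + 1) ^ 2 / 8) ≤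
      #G.edgeFinset := by
  set L : Finset α := {v | G.degree v ≤ k}
  set U : Finset α := {v | ¬G.degree v ≤ k}
  set A := {v ∈ L | G.degree v < k}
  set B := {v ∈ L | ¬G.degree v < k}
  set C := {v ∈ U | K ≤ G.degree v}
  set M := {v ∈ U | ¬K ≤ G.degree v}
  have hpart (g : α → ℕ) :
      ∑ v ∈ A, g v + ∑ v ∈ B, g v + ∑ v ∈ M, g v + ∑ v ∈ C, g v = ∑ v, g v := by
    rw [← sum_filter_add_sum_filter_not univ (fun v => G.degree v ≤ k),
      ← sum_filter_add_sum_filter_not L (fun v => G.degree v < k),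
      ← sum_filter_add_sum_filter_not U (fun v => K ≤ G.degree v)]
    ring
  have hcard : #A + #B + #M + #C = Fintype.card α := by
    simpa using hpart fun _ => 1
  have hsum : ∑ v ∈ A, G.degree v + ∑ v ∈ B, G.degree v + ∑ v ∈ M, G.degree v +
      ∑ v ∈ C, G.degree v = 2 * #G.edgeFinset := by
    rw [hpart, sum_degrees_eq_twice_card_edges]
  have hA : #A * #A ≤ ∑ v ∈ A, G.degree v + #A := by
    have hclique : G.IsClique (A : Set α) :=
      (isClique_degree_lt hlow).subset (by intro v; simp [A])
    simpa [sum_add_distrib] using hclique.card_mul_card_le_sum_degree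
  have hB : #B * k ≤ ∑ v ∈ B, G.degree v := by
    simpa using card_nsmul_le_sum B _ k fun v hv => not_lt.1 (mem_filter.1 hv).2
  have hM : #M * (k + 1) ≤ ∑ v ∈ M, G.degree v := by
    simpa using card_nsmul_le_sum M _ (k + 1) fun v hv =>
      not_le.1 (mem_filter.1 (mem_filter.1 hv).1).2
  have hC : #C * K ≤ ∑ v ∈ C, G.degree v := by
    simpa using card_nsmul_le_sum C _ K fun v hv => (mem_filter.1 hv).2
  have hL : #A + #B ≤ ∑ v ∈ C, G.degree v + (k + 1) := by
    have hC_eq : C = ({v | K ≤ G.degree v} : Finset α) := by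
      ext v
      simp only [C, U, mem_filter, mem_univ, true_and]
      omega
    rw [card_filter_add_card_filter_not, hC_eq]
    exact card_degree_le_le_sum_degree hhigh
  exact le_of_degree_class_sums hkK hcard hsum hA hB hM hC hL

end SimpleGraph

theorem stmt6_general {β : Type*} [Fintype β] (H : SimpleGraph β)
    (hiso : ∀ u v, H.Adj u v → (edgeNbhd H u v).Nonempty)
    (hk : paramK0 H < paramK1p H)
    (n : ℕ)
    (G : SimpleGraph (Fin n)) (hG : IsSat G H) :
    ((paramK0 H : ℝ) +
        ((paramK1p H : ℝ) - (paramK0 H : ℝ)) / ((paramK1p H : ℝ) + 1)) * n / 2 -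
      (((paramK0 H : ℝ) + 1) * ((paramK1p H : ℝ) - (paramK0 H : ℝ)) /
          (2 * (paramK1p H : ℝ) + 2) +
        ((paramK0 H : ℝ) + 1) ^ 2 / 8) ≤
      (G.edgeSet.ncard : ℝ) := by
  classical
  have hdeg (v : Fin n) : deg G v = G.degree v := deg_eq_degree G v
  have hbound := le_card_edgeFinset_of_not_adj_degree hk
    (fun x y hxy hadj => by simpa only [hdeg] using hG.paramK0_le_max_deg hxy hadj)
    (fun x y hxy hadj hx hy => by
      simpa only [hdeg] using
        hG.exists_adj_paramK1p_le_deg hiso hxy hadj (by rwa [hdeg]) (by rwa [hdeg]))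
  rwa [Fintype.card_fin, ← Set.ncard_coe_finset, coe_edgeFinset] at hbound

/-- Lemma (general, part 1, first bound): if `k1' > k0` then
`sat(n, H) ≥ (k0 + (k1' - k0)/(k1' + 1)) * n/2 - c1`. -/
theorem stmt6 {β : Type*} [Fintype β] (H : SimpleGraph β)
    (hedge : ∃ u v, H.Adj u v)
    (hiso : ∀ u v, H.Adj u v → (edgeNbhd H u v).Nonempty)
    (hk : paramK0 H < paramK1p H)
    (n : ℕ) (hn : Fintype.card β ≤ n)
    (G : SimpleGraph (Fin n)) (hG : IsSat G H) :
    ((paramK0 H : ℝ) +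
        ((paramK1p H : ℝ) - (paramK0 H : ℝ)) / ((paramK1p H : ℝ) + 1)) * n / 2 -
      (((paramK0 H : ℝ) + 1) * ((paramK1p H : ℝ) - (paramK0 H : ℝ)) /
          (2 * (paramK1p H : ℝ) + 2) +
        ((paramK0 H : ℝ) + 1) ^ 2 / 8) ≤
      (G.edgeSet.ncard : ℝ) :=
  stmt6_general H hiso hk n G hG
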